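/- Let d ≥ 1 be an integer and let Q be a finite (left) quasifield with q elements and kernel K. If A ⊆ Q satisfies |A| > q^{1/2 + 1/d}·(|K|−1)^{−1/(2d)}, then every γ ∈ Q\{0} can be written as γ = a₁·b₁ + a₂·b₂ + ⋯ + a_d·b_d with a₁,…,a_d, b₁,…,b_d ∈ A; that is, Q\{0} ⊆ A·A + ⋯ + A·A (with d summands A·A). -/

import Mathlib

/-- A finite (left) quasifield. -/
class Quasifield (Q : Type*) extends AddCommGroup Q, Mul Q, One Q where
  one_ne_zero : (1 : Q) ≠ 0
  one_mul : ∀ a : Q, 1 * a = a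
  mul_one : ∀ a : Q, a * 1 = a
  zero_mul : ∀ a : Q, 0 * a = 0
  mul_zero : ∀ a : Q, a * 0 = 0
  mul_ne_zero : ∀ a b : Q, a ≠ 0 → b ≠ 0 → a * b ≠ 0
  existsUnique_mul_left : ∀ a b : Q, a ≠ 0 → b ≠ 0 → ∃! x : Q, a * x = b
  existsUnique_mul_right : ∀ a b : Q, a ≠ 0 → b ≠ 0 → ∃! y : Q, y * a = b
  left_distrib : ∀ a b c : Q, a * (b + c) = a * b + a * c
  existsUnique_affine : ∀ a b c : Q, a ≠ b → ∃! x : Q, a * x = b * x + c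

/-- The kernel of a quasifield. -/
def Quasifield.kernel (Q : Type*) [Quasifield Q] : Set Q :=
  {k | (∀ x y : Q, (x + y) * k = x * k + y * k) ∧ ∀ x y : Q, (x * y) * k = x * (y * k)}

/-! For `y ∈ Q^d` and `e ∈ Q` let `N(y, e)` (`repCount A y e`) count the `x ∈ A^d` with
`∑ xᵢ·yᵢ = e`. For `x ≠ x'` the map `y ↦ x·y - x'·y` is additive (left distributivity) and onto
(the affine axiom at a coordinate where `x` and `x'` differ), so exactly `q^(d-1)` vectors `y`
satisfy `x·y = x'·y`. This computes the variance of `N` about its mean `|A|^d / q` exactly: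
`∑_{y,e} (N(y, e) - |A|^d / q)² = (q - 1)·q^(d-1)·|A|^d`.

If `γ ≠ 0` is not represented, then `N(y, γ) = 0` for every `y ∈ A^d`, and right
multiplication by a nonzero kernel element `t` gives `N(y·t, γ·t) = N(y, γ)`. The pairs
`(y·t, γ·t)` are distinct, so at least `(|K| - 1)·|A|^d` entries vanish, each contributing
`(|A|^d / q)²`. Hence `(|K| - 1)·|A|^(2d) ≤ (q - 1)·q^(d+1) < q^(d+2)`, contradicting the lower
bound on `|A|`. -/

namespace Quasifield

open Finset

variable {Q : Type*} [Quasifield Q]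

theorem mul_sub (a b c : Q) : a * (b - c) = a * b - a * c :=
  eq_sub_of_add_eq (by rw [← left_distrib, sub_add_cancel])

theorem mul_right_injective {a : Q} (ha : a ≠ 0) : Function.Injective (a * ·) := fun b c h =>
  sub_eq_zero.mp <| by_contra fun hbc =>
    Quasifield.mul_ne_zero a _ ha hbc (by rw [mul_sub]; exact sub_eq_zero.mpr h)

theorem zero_mem_kernel : (0 : Q) ∈ kernel Q :=
  ⟨fun x y => by simp only [Quasifield.mul_zero, add_zero],
    fun x y => by simp only [Quasifield.mul_zero]⟩

theorem one_mem_kernel : (1 : Q) ∈ kernel Q :=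
  ⟨fun x y => by simp only [Quasifield.mul_one], fun x y => by simp only [Quasifield.mul_one]⟩

theorem sub_mul_of_mem_kernel {k : Q} (hk : k ∈ kernel Q) (x y : Q) :
    (x - y) * k = x * k - y * k :=
  eq_sub_of_add_eq (by rw [← hk.1, sub_add_cancel])

theorem mul_left_injective_of_mem_kernel {k : Q} (hk : k ∈ kernel Q) (hk0 : k ≠ 0) :
    Function.Injective (· * k) := fun x y h =>
  sub_eq_zero.mp <| by_contra fun hxy =>
    Quasifield.mul_ne_zero _ k hxy hk0 (by rw [sub_mul_of_mem_kernel hk]; exact sub_eq_zero.mpr h)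

section Dot

variable {ι : Type*} [Fintype ι]

def dot (x y : ι → Q) : Q := ∑ i, x i * y i

def dotHom (x : ι → Q) : (ι → Q) →+ Q :=
  AddMonoidHom.mk' (dot x) fun y z => by
    simp only [dot, Pi.add_apply, left_distrib, sum_add_distrib]

@[simp]
theorem dotHom_apply (x y : ι → Q) : dotHom x y = dot x y := rfl

theorem dot_mul_of_mem_kernel {k : Q} (hk : k ∈ kernel Q) (x y : ι → Q) :
    dot x (fun i => y i * k) = dot x y * k := by
  have hsum := map_sum (AddMonoidHom.mk' (· * k) hk.1) (fun i => x i * y i) univ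
  simp only [AddMonoidHom.mk'_apply] at hsum
  rw [dot, dot, hsum]
  exact sum_congr rfl fun i _ => (hk.2 (x i) (y i)).symm

variable [DecidableEq ι]

theorem dot_single (x : ι → Q) (j : ι) (t : Q) :
    dot x (Pi.single j t) = x j * t := by
  rw [dot, Fintype.sum_eq_single j fun i hi => by rw [Pi.single_eq_of_ne hi, Quasifield.mul_zero],
    Pi.single_eq_same]

theorem dotHom_sub_dotHom_surjective {x x' : ι → Q} (hne : x ≠ x') :
    Function.Surjective (dotHom x - dotHom x') := by
  obtain ⟨j, hj⟩ := Function.ne_iff.mp hne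
  intro c
  obtain ⟨t, ht, -⟩ := existsUnique_affine (x j) (x' j) c hj
  refine ⟨Pi.single j t, ?_⟩
  change dot x _ - dot x' _ = c
  rw [dot_single, dot_single, ht, add_sub_cancel_left]

variable [Fintype Q] [DecidableEq Q]

theorem card_filter_dot_eq_dot_mul_card {x x' : ι → Q} (hne : x ≠ x') :
    #{y | dot x y = dot x' y} * Fintype.card Q = Fintype.card Q ^ Fintype.card ι := by
  set f := dotHom x - dotHom x'
  have hker : #{y | dot x y = dot x' y} = Nat.card f.ker := by
    rw [← Fintype.card_subtype, ← Nat.card_eq_fintype_card]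
    exact Nat.card_congr (Equiv.subtypeEquivRight fun y => by
      simp [f, AddMonoidHom.mem_ker, sub_eq_zero])
  rw [hker, ← Fintype.card_fun, ← Nat.card_eq_fintype_card (α := ι → Q),
    ← AddSubgroup.card_mul_index f.ker, AddSubgroup.index_eq_card,
    Nat.card_congr (QuotientAddGroup.quotientKerEquivOfSurjective f
      (dotHom_sub_dotHom_surjective hne)).toEquiv, Nat.card_eq_fintype_card (α := Q)]

theorem card_mul_card_filter_dot_eq_dot (x x' : ι → Q) :
    (Fintype.card Q : ℝ) * #{y | dot x y = dot x' y} =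
      (Fintype.card Q : ℝ) ^ Fintype.card ι * (if x = x' then (Fintype.card Q : ℝ) else 1) := by
  by_cases hxx' : x = x'
  · simp [hxx', mul_comm]
  · rw [if_neg hxx', _root_.mul_one, mul_comm]
    exact_mod_cast card_filter_dot_eq_dot_mul_card hxx'

end Dot

section RepCount

variable {ι : Type*} [Fintype ι] [DecidableEq ι] [DecidableEq Q] (A : Finset Q)

def repCount (y : ι → Q) (e : Q) : ℕ := #{x ∈ Fintype.piFinset fun _ : ι => A | dot x y = e}

theorem repCount_mul_of_mem_kernel {k : Q} (hk : k ∈ kernel Q) (hk0 : k ≠ 0)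
    (y : ι → Q) (e : Q) :
    repCount A (fun i => y i * k) (e * k) = repCount A y e := by
  simp only [repCount, dot_mul_of_mem_kernel hk, (mul_left_injective_of_mem_kernel hk hk0).eq_iff]

variable [Fintype Q]

theorem sum_repCount (y : ι → Q) : ∑ e, repCount A y e = #A ^ Fintype.card ι := by
  simp only [repCount]
  rw [← card_eq_sum_card_fiberwise fun _ _ => mem_univ _, Fintype.card_piFinset, prod_const,
    card_univ]

theorem sum_repCount_sq (y : ι → Q) :
    ∑ e, repCount A y e ^ 2 =
      ∑ x ∈ Fintype.piFinset (fun _ : ι => A), repCount A y (dot x y) := by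
  rw [← sum_fiberwise_of_maps_to (g := fun x => dot x y) (t := univ) fun _ _ => mem_univ _]
  refine sum_congr rfl fun e _ => ?_
  rw [sum_congr rfl fun x hx => congrArg (repCount A y) (mem_filter.mp hx).2, sum_const,
    smul_eq_mul, sq]
  rfl

theorem sum_sum_repCount_sq :
    ∑ y : ι → Q, ∑ e, repCount A y e ^ 2 =
      ∑ x ∈ Fintype.piFinset (fun _ : ι => A), ∑ x' ∈ Fintype.piFinset (fun _ : ι => A),
        #{y | dot x' y = dot x y} := by
  simp_rw [sum_repCount_sq, repCount, card_filter]
  rw [sum_comm]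
  exact sum_congr rfl fun x _ => sum_comm

theorem card_mul_sum_sum_repCount_sq :
    (Fintype.card Q : ℝ) * ∑ y : ι → Q, ∑ e, (repCount A y e : ℝ) ^ 2 =
      Fintype.card Q ^ Fintype.card ι * #A ^ Fintype.card ι *
        (#A ^ Fintype.card ι + Fintype.card Q - 1) := by
  set S := Fintype.piFinset fun _ : ι => A
  have hS : (#S : ℝ) = #A ^ Fintype.card ι := by simp [S]
  have hrow : ∀ x ∈ S, ∑ x' ∈ S, (if x' = x then (Fintype.card Q : ℝ) else 1) =
      #S + (Fintype.card Q - 1) := fun x hx =>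
    calc ∑ x' ∈ S, (if x' = x then (Fintype.card Q : ℝ) else 1)
        = ∑ x' ∈ S, (1 + if x' = x then (Fintype.card Q : ℝ) - 1 else 0) :=
          sum_congr rfl fun x' _ => by split_ifs <;> ring
      _ = #S + (Fintype.card Q - 1) := by
          rw [sum_add_distrib, sum_ite_eq', if_pos hx, sum_const, nsmul_one]
  have h := congrArg (Nat.cast (R := ℝ)) (sum_sum_repCount_sq (ι := ι) A)
  push_cast at h
  simp_rw [h, mul_sum, card_mul_card_filter_dot_eq_dot, ← mul_sum]
  rw [sum_congr rfl hrow, sum_const, nsmul_eq_mul, hS]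
  ring

theorem card_mul_sum_sum_sq_sub_repCount :
    (Fintype.card Q : ℝ) * ∑ y : ι → Q, ∑ e,
        ((repCount A y e : ℝ) - #A ^ Fintype.card ι / Fintype.card Q) ^ 2 =
      Fintype.card Q ^ Fintype.card ι * #A ^ Fintype.card ι * (Fintype.card Q - 1) := by
  have hq : (Fintype.card Q : ℝ) ≠ 0 := Nat.cast_ne_zero.mpr Fintype.card_ne_zero
  have hsum : ∀ y : ι → Q, ∑ e, (repCount A y e : ℝ) = #A ^ Fintype.card ι := fun y => by
    exact_mod_cast sum_repCount A y
  have hrow : ∀ y : ι → Q,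
      ∑ e, ((repCount A y e : ℝ) - #A ^ Fintype.card ι / Fintype.card Q) ^ 2 =
        ∑ e, (repCount A y e : ℝ) ^ 2 - (#A ^ Fintype.card ι) ^ 2 / Fintype.card Q := fun y => by
    simp only [sub_sq, sum_add_distrib, sum_sub_distrib, ← sum_mul, ← mul_sum, hsum, sum_const,
      card_univ, nsmul_eq_mul]
    field_simp
    ring
  rw [sum_congr rfl fun y _ => hrow y, sum_sub_distrib, _root_.mul_sub,
    card_mul_sum_sum_repCount_sq, sum_const, card_univ, Fintype.card_fun, nsmul_eq_mul]
  push_cast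
  field_simp
  ring

theorem card_mul_sq_le_sum_sum_sq_sub_repCount {γ : Q} (hγ : γ ≠ 0) {T : Finset Q}
    (hT : (T : Set Q) ⊆ kernel Q \ {0})
    (hγA : ∀ y ∈ Fintype.piFinset fun _ : ι => A, repCount A y γ = 0) (c : ℝ) :
    #T * #A ^ Fintype.card ι * c ^ 2 ≤
      ∑ y : ι → Q, ∑ e, ((repCount A y e : ℝ) - c) ^ 2 := by
  set S := Fintype.piFinset fun _ : ι => A
  set F : (ι → Q) × Q → ℝ := fun w => ((repCount A w.1 w.2 : ℝ) - c) ^ 2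
  set φ : (ι → Q) × Q → (ι → Q) × Q := fun p => (fun i => p.1 i * p.2, γ * p.2)
  have hφ : Set.InjOn φ ↑(S ×ˢ T) := by
    rintro ⟨y, t⟩ hyt ⟨y', t'⟩ - h
    simp only [φ, Prod.mk.injEq] at h
    obtain rfl : t = t' := mul_right_injective hγ h.2
    have ht := hT (mem_product.mp hyt).2
    exact Prod.ext (funext fun i => mul_left_injective_of_mem_kernel ht.1 ht.2 (congrFun h.1 i)) rfl
  have hFφ : ∀ p ∈ S ×ˢ T, F (φ p) = c ^ 2 := by
    rintro ⟨y, t⟩ hyt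
    have ht := hT (mem_product.mp hyt).2
    simp only [F, φ, repCount_mul_of_mem_kernel A ht.1 ht.2, hγA y (mem_product.mp hyt).1]
    ring
  calc (#T * #A ^ Fintype.card ι * c ^ 2 : ℝ) = ∑ p ∈ S ×ˢ T, F (φ p) := by
        rw [sum_congr rfl hFφ, sum_const, card_product, nsmul_eq_mul]
        simp [S, mul_comm]
    _ = ∑ w ∈ (S ×ˢ T).image φ, F w := (sum_image hφ).symm
    _ ≤ ∑ w, F w := sum_le_univ_sum_of_nonneg fun w => sq_nonneg _
    _ = _ := Fintype.sum_prod_type F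

theorem card_mul_sq_le_of_forall_dot_ne {γ : Q} (hγ : γ ≠ 0) {T : Finset Q}
    (hT : (T : Set Q) ⊆ kernel Q \ {0})
    (hγA : ∀ x ∈ Fintype.piFinset (fun _ : ι => A), ∀ y ∈ Fintype.piFinset (fun _ : ι => A),
      dot x y ≠ γ) :
    (#T : ℝ) * (#A ^ Fintype.card ι) ^ 2 ≤
      (Fintype.card Q - 1) * Fintype.card Q ^ (Fintype.card ι + 1) := by
  set q : ℝ := (Fintype.card Q : ℝ)
  set P : ℝ := (#A : ℝ) ^ Fintype.card ι
  have hq : 1 ≤ q := Nat.one_le_cast.mpr Fintype.card_pos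
  have hrep : ∀ y ∈ Fintype.piFinset fun _ : ι => A, repCount A y γ = 0 := fun y hy =>
    card_eq_zero.mpr (filter_eq_empty_iff.mpr fun x hx => hγA x hx y hy)
  have hlow := card_mul_sq_le_sum_sum_sq_sub_repCount A hγ hT hrep (P / q)
  rcases (show 0 ≤ P by positivity).eq_or_lt with hP | hP
  · rw [← hP, zero_pow two_ne_zero, MulZeroClass.mul_zero]
    exact mul_nonneg (by linarith) (by positivity)
  refine le_of_mul_le_mul_right ?_ hP
  calc (#T : ℝ) * P ^ 2 * P = q * (q * (#T * P * (P / q) ^ 2)) := by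
        field_simp
    _ ≤ q * (q * ∑ y : ι → Q, ∑ e, ((repCount A y e : ℝ) - P / q) ^ 2) := by gcongr
    _ = (q - 1) * q ^ (Fintype.card ι + 1) * P := by
        rw [card_mul_sum_sum_sq_sub_repCount]
        ring

end RepCount

end Quasifield

theorem pow_add_two_lt_mul_sq_pow_of_rpow_mul_rpow_lt {q k a : ℝ} {d : ℕ} (hd : d ≠ 0)
    (hq : 0 < q) (hk : 0 < k)
    (h : q ^ ((1 : ℝ) / 2 + 1 / (d : ℝ)) * k ^ (-(1 : ℝ) / (2 * (d : ℝ))) < a) :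
    q ^ (d + 2) < k * (a ^ d) ^ 2 := by
  have hpow := pow_lt_pow_left₀ h (by positivity) (by omega : 2 * d ≠ 0)
  have hd' : (d : ℝ) ≠ 0 := Nat.cast_ne_zero.mpr hd
  have e1 : ((1 : ℝ) / 2 + 1 / d) * ((2 * d : ℕ) : ℝ) = ((d + 2 : ℕ) : ℝ) := by
    push_cast
    field_simp
  have e2 : (-(1 : ℝ) / (2 * d)) * ((2 * d : ℕ) : ℝ) = -1 := by
    push_cast
    field_simp
  rw [mul_pow, ← Real.rpow_mul_natCast hq.le, ← Real.rpow_mul_natCast hk.le, e1, e2,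
    Real.rpow_natCast, Real.rpow_neg_one, ← div_eq_mul_inv, div_lt_iff₀ hk, pow_mul'] at hpow
  linarith

/-- Theorem 1.15: if `d ≥ 1` and `|A| > q^{1/2 + 1/d}·(|K|-1)^{-1/(2d)}`, then every
nonzero `γ` is a sum of `d` products of pairs of elements of `A`;
that is, `Q \ {0} ⊆ A·A + ⋯ + A·A` (`d` summands). -/
theorem stmt_10 {Q : Type*} [Quasifield Q] [Fintype Q] [DecidableEq Q]
    (d : ℕ) (hd : 1 ≤ d) (A : Finset Q)
    (hA : (Fintype.card Q : ℝ) ^ ((1 : ℝ) / 2 + 1 / (d : ℝ)) *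
        (((Quasifield.kernel Q).ncard : ℝ) - 1) ^ (-(1 : ℝ) / (2 * (d : ℝ))) < (A.card : ℝ)) :
    ∀ γ : Q, γ ≠ 0 → ∃ f g : Fin d → Q,
      (∀ i, f i ∈ A) ∧ (∀ i, g i ∈ A) ∧ γ = ∑ i, f i * g i := by
  intro γ hγ
  by_contra hγA
  set T := (Set.toFinite (Quasifield.kernel Q \ {0})).toFinset
  have hTsub : (T : Set Q) ⊆ Quasifield.kernel Q \ {0} := by simp [T]
  have hT : (T.card : ℝ) = (Quasifield.kernel Q).ncard - 1 := by
    have := Set.ncard_sdiff_singleton_add_one (Quasifield.zero_mem_kernel (Q := Q))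
    rw [Set.ncard_eq_toFinset_card _ (Set.toFinite _)] at this
    rw [← this]
    push_cast
    ring
  have hk : (0 : ℝ) < T.card := Nat.cast_pos.mpr <| Finset.card_pos.mpr
    ⟨1, by simp [T, Quasifield.one_mem_kernel, Quasifield.one_ne_zero]⟩
  have hq : (0 : ℝ) < Fintype.card Q := Nat.cast_pos.mpr Fintype.card_pos
  have hlower := pow_add_two_lt_mul_sq_pow_of_rpow_mul_rpow_lt (by omega) hq hk (hT ▸ hA)
  have hupper := Quasifield.card_mul_sq_le_of_forall_dot_ne (ι := Fin d) A hγ hTsub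
    fun x hx y hy h =>
      hγA ⟨x, y, Fintype.mem_piFinset.mp hx, Fintype.mem_piFinset.mp hy, h.symm⟩
  rw [Fintype.card_fin] at hupper
  linarith [pow_pos hq (d + 1), pow_succ (Fintype.card Q : ℝ) (d + 1)]
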